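/- Exact occurrence of a structural pattern is equivalent to simultaneous string occurrence: with labels as above, pattern R1 occurs structurally in text R2 at position i (under the window-closure condition) if and only if the string s1 occurs in s2 at position i and the string L1(1)...L1(m) occurs in L2(1)...L2(n) at position i. Hence the set of exact structural occurrence positions equals the intersection of the two sets of string occurrence positions. -/
import Mathlib


inductive Base : Type
  | A | C | G | U
deriving DecidableEq

/-- Exact structural pattern occurrence equals simultaneous string occurrence:
the set of positions (satisfying the window-closure condition) where `R₁` occurs
structurally in `R₂` is the intersection of the set of positions where the base string
`s₁` occurs in `s₂` and the set of positions where the label string `L₁` occurs in `L₂`. -/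
theorem structural_occurrences_eq_inter_string_occurrences
    (m n : ℕ) (s₁ s₂ : ℕ → Base)
    (U₁ U₂ : Finset ℕ) (P₁ P₂ : Finset (ℕ × ℕ))
    (hP₁ : ∀ q ∈ P₁, 1 ≤ q.1 ∧ q.1 < q.2 ∧ q.2 ≤ m)
    (hP₂ : ∀ q ∈ P₂, 1 ≤ q.1 ∧ q.1 < q.2 ∧ q.2 ≤ n)
    (hcover₁ : ∀ j, 1 ≤ j → j ≤ m →
      (j ∈ U₁ ∧ ∀ q ∈ P₁, q.1 ≠ j ∧ q.2 ≠ j) ∨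
      (j ∉ U₁ ∧ ∃! q, q ∈ P₁ ∧ (q.1 = j ∨ q.2 = j)))
    (hcover₂ : ∀ j, 1 ≤ j → j ≤ n →
      (j ∈ U₂ ∧ ∀ q ∈ P₂, q.1 ≠ j ∧ q.2 ≠ j) ∨
      (j ∉ U₂ ∧ ∃! q, q ∈ P₂ ∧ (q.1 = j ∨ q.2 = j)))
    (hnonshare₁ : ∀ q ∈ P₁, ∀ r ∈ P₁, q.2 ≠ r.1 ∧ (q.1 = r.1 ↔ q.2 = r.2))
    (hnonshare₂ : ∀ q ∈ P₂, ∀ r ∈ P₂, q.2 ≠ r.1 ∧ (q.1 = r.1 ↔ q.2 = r.2))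
    (p₁ p₂ : ℕ → ℕ)
    (hp₁U : ∀ j ∈ U₁, p₁ j = j) (hp₁P : ∀ q ∈ P₁, p₁ q.1 = q.2 ∧ p₁ q.2 = q.1)
    (hp₂U : ∀ j ∈ U₂, p₂ j = j) (hp₂P : ∀ q ∈ P₂, p₂ q.1 = q.2 ∧ p₂ q.2 = q.1)
    (L₁ L₂ : ℕ → ℤ)
    (hL₁ : ∀ j, 1 ≤ j → j ≤ m → L₁ j = if j ∈ U₁ then 0 else (p₁ j : ℤ) - (j : ℤ))
    (hL₂ : ∀ j, 1 ≤ j → j ≤ n → L₂ j = if j ∈ U₂ then 0 else (p₂ j : ℤ) - (j : ℤ))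
    (hm : 1 ≤ m) :
    {i : ℕ | 1 ≤ i ∧ i + m - 1 ≤ n ∧
      (∀ q ∈ P₂, (i ≤ q.1 ∧ q.1 ≤ i + m - 1) ↔ (i ≤ q.2 ∧ q.2 ≤ i + m - 1)) ∧
      (∀ j, 1 ≤ j → j ≤ m → s₂ (i + j - 1) = s₁ j) ∧
      (∀ j, 1 ≤ j → j ≤ m → (j ∈ U₁ ↔ (i + j - 1) ∈ U₂)) ∧
      (∀ j k, 1 ≤ j → j < k → k ≤ m →
        ((j, k) ∈ P₁ ↔ (i + j - 1, i + k - 1) ∈ P₂))}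
    =
    {i : ℕ | 1 ≤ i ∧ i + m - 1 ≤ n ∧
      (∀ q ∈ P₂, (i ≤ q.1 ∧ q.1 ≤ i + m - 1) ↔ (i ≤ q.2 ∧ q.2 ≤ i + m - 1)) ∧
      (∀ j, 1 ≤ j → j ≤ m → s₂ (i + j - 1) = s₁ j)}
    ∩
    {i : ℕ | 1 ≤ i ∧ i + m - 1 ≤ n ∧
      (∀ q ∈ P₂, (i ≤ q.1 ∧ q.1 ≤ i + m - 1) ↔ (i ≤ q.2 ∧ q.2 ≤ i + m - 1)) ∧
      (∀ j, 1 ≤ j → j ≤ m → L₂ (i + j - 1) = L₁ j)} := by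
  ext i
  simp only [Set.mem_setOf_eq, Set.mem_inter_iff]
  have key₁ : ∀ j, 1 ≤ j → j ≤ m → j ∉ U₁ →
      ∃ q ∈ P₁, (q.1 = j ∧ p₁ j = q.2) ∨ (q.2 = j ∧ p₁ j = q.1) := by
    intro j hj1 hjm hjU
    rcases hcover₁ j hj1 hjm with ⟨h, _⟩ | ⟨_, q, ⟨hqP, hq⟩, _⟩
    · exact absurd h hjU
    · refine ⟨q, hqP, ?_⟩
      rcases hq with h | h
      · exact Or.inl ⟨h, by rw [← h]; exact (hp₁P q hqP).1⟩
      · exact Or.inr ⟨h, by rw [← h]; exact (hp₁P q hqP).2⟩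
  have key₂ : ∀ j, 1 ≤ j → j ≤ n → j ∉ U₂ →
      ∃ q ∈ P₂, (q.1 = j ∧ p₂ j = q.2) ∨ (q.2 = j ∧ p₂ j = q.1) := by
    intro j hj1 hjn hjU
    rcases hcover₂ j hj1 hjn with ⟨h, _⟩ | ⟨_, q, ⟨hqP, hq⟩, _⟩
    · exact absurd h hjU
    · refine ⟨q, hqP, ?_⟩
      rcases hq with h | h
      · exact Or.inl ⟨h, by rw [← h]; exact (hp₂P q hqP).1⟩
      · exact Or.inr ⟨h, by rw [← h]; exact (hp₂P q hqP).2⟩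
  constructor
  · rintro ⟨h1, h2, h3, hs, hU, hP⟩
    refine ⟨⟨h1, h2, h3, hs⟩, h1, h2, h3, ?_⟩
    intro j hj1 hjm
    have hx1 : 1 ≤ i + j - 1 := by omega
    have hxn : i + j - 1 ≤ n := by omega
    rw [hL₂ _ hx1 hxn, hL₁ j hj1 hjm]
    by_cases hj : j ∈ U₁
    · simp [hj, (hU j hj1 hjm).mp hj]
    · have hj2 : i + j - 1 ∉ U₂ := fun h => hj ((hU j hj1 hjm).mpr h)
      simp only [hj, hj2, if_false]
      obtain ⟨q, hqP, hq⟩ := key₁ j hj1 hjm hj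
      obtain ⟨hq1, hq12, hq2m⟩ := hP₁ q hqP
      obtain ⟨a, b⟩ := q
      simp only at hq hq1 hq12 hq2m
      rcases hq with ⟨he, hpj⟩ | ⟨he, hpj⟩
      · rw [he] at hqP hq12
        have hmem : (i + j - 1, i + b - 1) ∈ P₂ :=
          (hP j b hj1 hq12 hq2m).mp hqP
        have := (hp₂P _ hmem).1
        simp only at this
        omega
      · rw [he] at hqP hq12
        have hmem : (i + a - 1, i + j - 1) ∈ P₂ :=
          (hP a j hq1 hq12 hjm).mp hqP
        have := (hp₂P _ hmem).2
        simp only at this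
        omega
  · rintro ⟨⟨h1, h2, h3, hs⟩, _, _, _, hL⟩
    have hLab : ∀ j, 1 ≤ j → j ≤ m →
        (if i + j - 1 ∈ U₂ then (0:ℤ) else (p₂ (i+j-1) : ℤ) - (i+j-1 : ℕ)) =
        (if j ∈ U₁ then (0:ℤ) else (p₁ j : ℤ) - (j : ℤ)) := by
      intro j hj1 hjm
      have hx1 : 1 ≤ i + j - 1 := by omega
      have hxn : i + j - 1 ≤ n := by omega
      have := hL j hj1 hjm
      rwa [hL₂ _ hx1 hxn, hL₁ j hj1 hjm] at this
    have hU : ∀ j, 1 ≤ j → j ≤ m → (j ∈ U₁ ↔ (i + j - 1) ∈ U₂) := by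
      intro j hj1 hjm
      have hx1 : 1 ≤ i + j - 1 := by omega
      have hxn : i + j - 1 ≤ n := by omega
      have hlab := hLab j hj1 hjm
      constructor
      · intro hj
        by_contra hj2
        obtain ⟨q, hqP, hq⟩ := key₂ _ hx1 hxn hj2
        obtain ⟨hq1, hq12, hq2m⟩ := hP₂ q hqP
        simp only [hj, hj2, if_true, if_false] at hlab
        rcases hq with ⟨he, hpj⟩ | ⟨he, hpj⟩ <;> omega
      · intro hj2
        by_contra hj
        obtain ⟨q, hqP, hq⟩ := key₁ _ hj1 hjm hj
        obtain ⟨hq1, hq12, hq2m⟩ := hP₁ q hqP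
        simp only [hj, hj2, if_true, if_false] at hlab
        rcases hq with ⟨he, hpj⟩ | ⟨he, hpj⟩ <;> omega
    refine ⟨h1, h2, h3, hs, hU, ?_⟩
    intro j k hj1 hjk hkm
    have hjm : j ≤ m := by omega
    have hk1 : 1 ≤ k := by omega
    have hx1 : 1 ≤ i + j - 1 := by omega
    have hxn : i + j - 1 ≤ n := by omega
    have hlab := hLab j hj1 hjm
    constructor
    · intro hmem
      have hj : j ∉ U₁ := by
        intro hj
        rcases hcover₁ j hj1 hjm with ⟨_, hno⟩ | ⟨hno, _⟩
        · exact (hno _ hmem).1 rfl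
        · exact hno hj
      have hp1 : p₁ j = k := (hp₁P _ hmem).1
      have hj2 : i + j - 1 ∉ U₂ := fun h => hj ((hU j hj1 hjm).mpr h)
      simp only [hj, hj2, if_false] at hlab
      have hp2 : p₂ (i + j - 1) = i + k - 1 := by omega
      obtain ⟨q, hqP, hq⟩ := key₂ _ hx1 hxn hj2
      obtain ⟨hq1, hq12, hq2m⟩ := hP₂ q hqP
      obtain ⟨a, b⟩ := q
      simp only at hq hq1 hq12 hq2m
      rcases hq with ⟨he, hpe⟩ | ⟨he, hpe⟩
      · have : a = i + j - 1 ∧ b = i + k - 1 := by omega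
        rw [show ((i:ℕ) + j - 1, i + k - 1) = (a, b) by simp [this.1, this.2]]
        exact hqP
      · omega
    · intro hmem
      have hj2 : i + j - 1 ∉ U₂ := by
        intro hj2
        rcases hcover₂ _ hx1 hxn with ⟨_, hno⟩ | ⟨hno, _⟩
        · exact (hno _ hmem).1 rfl
        · exact hno hj2
      have hp2 : p₂ (i + j - 1) = i + k - 1 := (hp₂P _ hmem).1
      have hj : j ∉ U₁ := fun h => hj2 ((hU j hj1 hjm).mp h)
      simp only [hj, hj2, if_false] at hlab
      have hp1 : p₁ j = k := by omega
      obtain ⟨q, hqP, hq⟩ := key₁ _ hj1 hjm hj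
      obtain ⟨hq1, hq12, hq2m⟩ := hP₁ q hqP
      obtain ⟨a, b⟩ := q
      simp only at hq hq1 hq12 hq2m
      rcases hq with ⟨he, hpe⟩ | ⟨he, hpe⟩
      · have : a = j ∧ b = k := by omega
        rw [show ((j:ℕ), k) = (a, b) by simp [this.1, this.2]]
        exact hqP
      · omega
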